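/- arXiv:1603.01887 — 3 statements merged into one kernel-verified Lean document; each statement's English description precedes it below -/
import Mathlib

section
/- Let P and Q be discrete probability distributions on a countable set with equal support, and suppose the max divergence satisfies D_∞(P‖Q) ≤ ε and D_∞(Q‖P) ≤ ε for some ε ≥ 0. Then the expected privacy loss satisfies E[L_(P‖Q)] = D_KL(P‖Q) ≤ ε·(e^ε − 1)/2, and the centered privacy loss random variable L_(P‖Q) − E[L_(P‖Q)] is ε-subgaussian. -/
open scoped ENNReal

/-- The probability that a discrete distribution `P` assigns to a set `S`. -/
noncomputable def pmfProb {α : Type*} (P : PMF α) (S : Set α) : ℝ≥0∞ :=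
  ∑' x, S.indicator (fun y => P y) x

/-- The (exponentiated) max divergence `exp (D_∞(P‖Q)) = sup_S P(S)/Q(S)`;
`D_∞(P‖Q) ≤ ε` is expressed as `DinfExp P Q ≤ ENNReal.ofReal (exp ε)`. -/
noncomputable def DinfExp {α : Type*} (P Q : PMF α) : ℝ≥0∞ :=
  ⨆ S : Set α, pmfProb P S / pmfProb Q S

/-- The KL divergence `D_KL(P‖Q) = E_{y∼P}[ln (P(y)/Q(y))]`, which is the expectation of
the privacy loss random variable `L_(P‖Q)`. -/
noncomputable def KL {α : Type*} (P Q : PMF α) : ℝ :=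
  ∑' x, (P x).toReal * Real.log ((P x).toReal / (Q x).toReal)

/-- The centered privacy loss random variable `L_(P‖Q) − E[L_(P‖Q)]` is τ-subgaussian. -/
def LossSubG {α : Type*} (P Q : PMF α) (τ : ℝ) : Prop :=
  ∀ l : ℝ,
    (∑' x, (P x).toReal *
        Real.exp (l * (Real.log ((P x).toReal / (Q x).toReal) - KL P Q)))
      ≤ Real.exp (l ^ 2 * τ ^ 2 / 2)

/-!
The two max-divergence bounds, applied to singletons, give `P x ≤ e^ε Q x` and `Q x ≤ e^ε P x`,
so the privacy loss `L = log (P/Q)` lies in `[-ε, ε]` `P`-almost surely. Since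
`E_P[e^{-L}] = ∑ Q = 1`, we get `KL = E_P[L] = E_P[L - 1 + e^{-L}]`, and the convex function
`t - 1 + e^{-t}` is at most `e^ε - 1 - ε ≤ ε (e^ε - 1) / 2` on `[-ε, ε]`. Subgaussianity of the
centered loss with parameter `ε` is Hoeffding's lemma for a variable ranging over an interval of
length `2ε`.
-/

open Real Set MeasureTheory ProbabilityTheory

lemma Real.sub_one_add_exp_neg_le_of_mem_Icc {ε t : ℝ} (ht : t ∈ Icc (-ε) ε) :
    t - 1 + exp (-t) ≤ exp ε - 1 - ε := by
  have hexp : ConvexOn ℝ univ (fun s : ℝ => exp (-s)) := by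
    simpa [Function.comp_def] using convexOn_exp.comp_linearMap (-LinearMap.id (R := ℝ))
  have hconv : ConvexOn ℝ univ (fun s : ℝ => s - 1 + exp (-s)) :=
    (((convexOn_id convex_univ).add_const (-1 : ℝ)).add hexp :)
  have hε : 0 ≤ ε := by linarith [ht.1, ht.2]
  have hseg : t ∈ segment ℝ (-ε) ε := by rwa [segment_eq_Icc (by linarith)]
  have hsinh : ε - 1 + exp (-ε) ≤ -ε - 1 + exp (- -ε) := by
    have := self_le_sinh_iff.2 hε
    rw [sinh_eq] at this
    rw [neg_neg]
    linarith
  have := hconv.le_on_segment (mem_univ _) (mem_univ _) hseg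
  rw [max_eq_left hsinh, neg_neg] at this
  linarith

lemma Real.exp_sub_one_sub_le_mul_exp_sub_one_div_two {x : ℝ} (hx : 0 ≤ x) :
    exp x - 1 - x ≤ x * (exp x - 1) / 2 := by
  -- Equivalent to `(2 - x) e^x ≤ 2 + x`, i.e. to `(2 + x) e^{-x} + x ≥ 2`, the value at `0`.
  have hderiv (s : ℝ) : HasDerivAt (fun s => (2 + s) * exp (-s) + s)
      (1 - (1 + s) * exp (-s)) s := by
    refine ((((hasDerivAt_id s).const_add 2).mul (hasDerivAt_neg s).exp).add
      (hasDerivAt_id s)).congr_deriv ?_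
    simp only [id]
    ring
  have hderiv_nonneg (s : ℝ) : 0 ≤ 1 - (1 + s) * exp (-s) := by
    have := mul_le_mul_of_nonneg_right (add_one_le_exp s) (exp_pos (-s)).le
    rw [← exp_add, add_neg_cancel, exp_zero, add_comm] at this
    linarith
  have hF := monotone_of_hasDerivAt_nonneg hderiv hderiv_nonneg hx
  simp only [add_zero, neg_zero, exp_zero, mul_one] at hF
  have hinv : exp (-x) * exp x = 1 := by rw [← exp_add, neg_add_cancel, exp_zero]
  nlinarith [exp_pos x]

lemma Real.abs_log_div_le_of_le_exp_mul {p q c : ℝ} (hp : 0 < p) (hpq : p ≤ exp c * q)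
    (hqp : q ≤ exp c * p) : |log (p / q)| ≤ c := by
  have hq : 0 < q := pos_of_mul_pos_right (hp.trans_le hpq) (exp_pos c).le
  rw [abs_le, neg_le, ← log_inv, inv_div, log_le_iff_le_exp (div_pos hq hp),
    log_le_iff_le_exp (div_pos hp hq), div_le_iff₀ hp, div_le_iff₀ hq]
  exact ⟨hqp, hpq⟩

lemma ProbabilityTheory.integral_le_exp_sub_one_sub_of_ae_mem_Icc {Ω : Type*}
    [MeasurableSpace Ω] {μ : Measure Ω} [IsProbabilityMeasure μ] {X : Ω → ℝ} {ε : ℝ} (hm : AEMeasurable X μ)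
    (hb : ∀ᵐ ω ∂μ, X ω ∈ Icc (-ε) ε) (h : 1 ≤ μ[fun ω => exp (-X ω)]) :
    μ[X] ≤ exp ε - 1 - ε := by
  have hexp : Integrable (fun ω => exp (-X ω)) μ := by
    simpa using integrable_exp_mul_of_mem_Icc (t := -1) hm hb
  have hX : Integrable X μ := .of_mem_Icc _ _ hm hb
  have hpt : X ≤ᵐ[μ] fun ω => (exp ε - ε) - exp (-X ω) := by
    filter_upwards [hb] with ω hω
    have := Real.sub_one_add_exp_neg_le_of_mem_Icc hω
    linarith
  calc ∫ ω, X ω ∂μ ≤ ∫ ω, (exp ε - ε) - exp (-X ω) ∂μ :=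
        integral_mono_ae hX ((integrable_const _).sub hexp) hpt
    _ ≤ exp ε - 1 - ε := by
        rw [integral_sub (integrable_const _) hexp, integral_const, probReal_univ, one_smul]
        linarith

lemma pmfProb_singleton {α : Type*} (P : PMF α) (x : α) : pmfProb P {x} = P x := by
  rw [pmfProb, tsum_eq_single x fun y hy => indicator_of_notMem (mem_singleton_iff.not.2 hy) _,
    indicator_of_mem (mem_singleton x)]

lemma apply_le_mul_of_DinfExp_le {α : Type*} {P Q : PMF α} {c : ℝ≥0∞} (h : DinfExp P Q ≤ c)
    (hc : c ≠ ⊤) (x : α) : P x ≤ c * Q x := by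
  have hx : P x / Q x ≤ c := by
    simpa only [pmfProb_singleton] using (le_iSup (fun S => pmfProb P S / pmfProb Q S) {x}).trans h
  exact (ENNReal.div_le_iff_le_mul (.inr hc) (.inl (Q.apply_ne_top x))).1 hx

lemma toReal_apply_le_exp_mul_of_DinfExp_le {α : Type*} {P Q : PMF α} {ε : ℝ}
    (h : DinfExp P Q ≤ ENNReal.ofReal (exp ε)) (x : α) :
    (P x).toReal ≤ exp ε * (Q x).toReal := by
  have := ENNReal.toReal_mono (ENNReal.mul_ne_top ENNReal.ofReal_ne_top (Q.apply_ne_top x))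
    (apply_le_mul_of_DinfExp_le h ENNReal.ofReal_ne_top x)
  rwa [ENNReal.toReal_mul, ENNReal.toReal_ofReal (exp_pos ε).le] at this

namespace PMF

variable {α : Type*} {P Q : PMF α} {ε : ℝ}

/-- Where `P x = 0` this is a junk value, but such points are `P`-null. -/
noncomputable def privacyLoss (P Q : PMF α) (x : α) : ℝ :=
  log ((P x).toReal / (Q x).toReal)

lemma ae_privacyLoss_mem_Icc [MeasurableSpace α] [MeasurableSingletonClass α]
    (hPQ : ∀ x, (P x).toReal ≤ exp ε * (Q x).toReal)
    (hQP : ∀ x, (Q x).toReal ≤ exp ε * (P x).toReal) :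
    ∀ᵐ x ∂P.toMeasure, P.privacyLoss Q x ∈ Icc (-ε) ε := by
  rw [← P.restrict_toMeasure_support]
  filter_upwards [ae_restrict_mem P.support_countable.measurableSet] with x hx
  have hp : 0 < (P x).toReal := ENNReal.toReal_pos hx (P.apply_ne_top x)
  exact abs_le.1 (Real.abs_log_div_le_of_le_exp_mul hp (hPQ x) (hQP x))

variable [MeasurableSpace α] [DiscreteMeasurableSpace α]

lemma integral_privacyLoss (hL : ∀ᵐ x ∂P.toMeasure, P.privacyLoss Q x ∈ Icc (-ε) ε) :
    ∫ x, P.privacyLoss Q x ∂P.toMeasure = KL P Q :=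
  P.integral_eq_tsum _ (.of_mem_Icc _ _ Measurable.of_discrete.aemeasurable hL)

lemma integral_exp_neg_privacyLoss (hsupp : P.support = Q.support)
    (hL : ∀ᵐ x ∂P.toMeasure, P.privacyLoss Q x ∈ Icc (-ε) ε) :
    ∫ x, exp (-P.privacyLoss Q x) ∂P.toMeasure = 1 := by
  have hint := integrable_exp_mul_of_mem_Icc (t := -1) Measurable.of_discrete.aemeasurable hL
  simp only [neg_one_mul] at hint
  have hterm (x : α) : (P x).toReal • exp (-P.privacyLoss Q x) = (Q x).toReal := by
    by_cases hx : P x = 0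
    · have hQx : Q x = 0 := by rwa [Q.apply_eq_zero_iff, ← hsupp, ← P.apply_eq_zero_iff]
      simp [hx, hQx]
    have hQx : Q x ≠ 0 := by rwa [Ne, Q.apply_eq_zero_iff, ← hsupp, ← P.apply_eq_zero_iff]
    have hp := ENNReal.toReal_pos hx (P.apply_ne_top x)
    have hq := ENNReal.toReal_pos hQx (Q.apply_ne_top x)
    rw [privacyLoss, exp_neg, exp_log (div_pos hp hq), inv_div, smul_eq_mul, mul_div_cancel₀ _ hp.ne']
  rw [P.integral_eq_tsum _ hint, tsum_congr hterm, ← ENNReal.tsum_toReal_eq Q.apply_ne_top,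
    Q.tsum_coe, ENNReal.toReal_one]

lemma KL_le_of_ae_mem_Icc (hsupp : P.support = Q.support)
    (hL : ∀ᵐ x ∂P.toMeasure, P.privacyLoss Q x ∈ Icc (-ε) ε) :
    KL P Q ≤ exp ε - 1 - ε := by
  rw [← integral_privacyLoss hL]
  exact integral_le_exp_sub_one_sub_of_ae_mem_Icc Measurable.of_discrete.aemeasurable hL
    (integral_exp_neg_privacyLoss hsupp hL).ge

lemma lossSubG_of_ae_mem_Icc (hL : ∀ᵐ x ∂P.toMeasure, P.privacyLoss Q x ∈ Icc (-ε) ε) :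
    LossSubG P Q ε := by
  intro t
  have hsub := hasSubgaussianMGF_of_mem_Icc Measurable.of_discrete.aemeasurable hL
  rw [integral_privacyLoss hL] at hsub
  have := hsub.mgf_le t
  rw [mgf, P.integral_eq_tsum _ (hsub.integrable_exp_mul t)] at this
  have hc : (((‖ε - -ε‖₊ / 2) ^ 2 : NNReal) : ℝ) = ε ^ 2 := by
    rw [NNReal.coe_pow, NNReal.coe_div, coe_nnnorm, Real.norm_eq_abs, sub_neg_eq_add, ← two_mul,
      abs_mul, abs_two, NNReal.coe_ofNat, mul_div_cancel_left₀ _ two_ne_zero, sq_abs]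
  rwa [hc, mul_comm (ε ^ 2)] at this

end PMF

theorem dp_implies_cdp_general {α : Type*} (P Q : PMF α) (ε : ℝ) (hε : 0 ≤ ε)
    (hsupp : P.support = Q.support)
    (h1 : DinfExp P Q ≤ ENNReal.ofReal (Real.exp ε))
    (h2 : DinfExp Q P ≤ ENNReal.ofReal (Real.exp ε)) :
    KL P Q ≤ ε * (Real.exp ε - 1) / 2 ∧ LossSubG P Q ε := by
  let _ : MeasurableSpace α := ⊤
  have hL := PMF.ae_privacyLoss_mem_Icc (toReal_apply_le_exp_mul_of_DinfExp_le h1)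
    (toReal_apply_le_exp_mul_of_DinfExp_le h2)
  exact ⟨(PMF.KL_le_of_ae_mem_Icc hsupp hL).trans
    (Real.exp_sub_one_sub_le_mul_exp_sub_one_div_two hε), PMF.lossSubG_of_ae_mem_Icc hL⟩

/-- **Pure DP implies concentrated DP (distributional form).** Let `P, Q` be discrete
distributions on a countable set with equal support such that `D_∞(P‖Q) ≤ ε` and
`D_∞(Q‖P) ≤ ε` for some `ε ≥ 0`. Then the expected privacy loss satisfies
`E[L_(P‖Q)] = D_KL(P‖Q) ≤ ε (e^ε − 1)/2`, and the centered privacy loss random variable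
`L_(P‖Q) − E[L_(P‖Q)]` is ε-subgaussian. -/
theorem dp_implies_cdp {α : Type*} [Countable α] (P Q : PMF α) (ε : ℝ) (hε : 0 ≤ ε)
    (hsupp : P.support = Q.support)
    (h1 : DinfExp P Q ≤ ENNReal.ofReal (Real.exp ε))
    (h2 : DinfExp Q P ≤ ENNReal.ofReal (Real.exp ε)) :
    KL P Q ≤ ε * (Real.exp ε - 1) / 2 ∧ LossSubG P Q ε :=
  dp_implies_cdp_general P Q ε hε hsupp h1 h2
end

section
/- For any two discrete probability distributions D and D' on a countable set with equal support such that D_∞(D‖D') ≤ ε and D_∞(D'‖D) ≤ ε, one has D_KL(D‖D') + D_KL(D'‖D) ≤ ε·(e^ε − 1); in particular D_KL(D‖D') ≤ ε·(e^ε − 1). -/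
/-!
Write `p x, q x` for the two probability mass functions and `c = e^ε`. Testing the max
divergences on singletons gives `p ≤ c q` and `q ≤ c p` pointwise, hence `|log (p/q)| ≤ ε`
and `|p - q| ≤ (c - 1) q`. Since `log (q/p) = -log (p/q)`, the two KL sums combine into
`∑ (p - q) log (p/q) ≤ ∑ ε (c - 1) q = ε (c - 1)`. The second claim follows from Gibbs'
inequality `0 ≤ D_KL(D'‖D)`, a sum of the pointwise bounds `q - p ≤ q log (q/p)`.
-/

open scoped ENNReal

open Real

section RealInequalities

variable {p q ε : ℝ}

lemma mul_log_div_add_mul_log_div (p q : ℝ) :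
    p * log (p / q) + q * log (q / p) = (p - q) * log (p / q) := by
  rw [← inv_div p q, log_inv]
  ring

lemma sub_le_mul_log_div (hp : 0 ≤ p) (hq : 0 ≤ q) (hqp : q = 0 → p = 0) :
    p - q ≤ p * log (p / q) := by
  rcases hp.eq_or_lt with rfl | hp
  · simpa using hq
  have hq : 0 < q := hq.lt_of_ne fun h => hp.ne' (hqp h.symm)
  have h := mul_le_mul_of_nonneg_left (one_sub_inv_le_log_of_pos (div_pos hp hq)) hp.le
  rwa [inv_div, mul_sub, mul_one, mul_div_cancel₀ _ hp.ne'] at h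

lemma abs_log_div_le (hε : 0 ≤ ε) (hp : 0 ≤ p) (hq : 0 ≤ q)
    (hpq : p ≤ exp ε * q) (hqp : q ≤ exp ε * p) : |log (p / q)| ≤ ε := by
  rcases (div_nonneg hp hq).eq_or_lt with h | h
  · simpa [← h] using hε
  have hp : 0 < p := hp.lt_of_ne fun h' => by simp [← h'] at h
  have hq : 0 < q := hq.lt_of_ne fun h' => by simp [← h'] at h
  rw [abs_le, le_log_iff_exp_le h, log_le_iff_le_exp h, exp_neg, inv_le_comm₀ (exp_pos ε) h,
    inv_div, div_le_iff₀ hp, div_le_iff₀ hq]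
  exact ⟨hqp, hpq⟩

lemma abs_sub_le_exp_sub_one_mul (hq : 0 ≤ q) (hpq : p ≤ exp ε * q) (hqp : q ≤ exp ε * p) :
    |p - q| ≤ (exp ε - 1) * q := by
  rw [abs_sub_le_iff]
  refine ⟨by linarith, ?_⟩
  -- `q ≤ e^ε p` and `e^ε + e^{-ε} ≥ 2` give `(2 - e^ε) q ≤ p`.
  nlinarith [exp_pos ε, mul_nonneg hq (sq_nonneg (exp ε - 1))]

lemma mul_log_div_add_mul_log_div_le (hε : 0 ≤ ε) (hp : 0 ≤ p) (hq : 0 ≤ q)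
    (hpq : p ≤ exp ε * q) (hqp : q ≤ exp ε * p) :
    p * log (p / q) + q * log (q / p) ≤ ε * (exp ε - 1) * q := by
  rw [mul_log_div_add_mul_log_div]
  calc (p - q) * log (p / q) ≤ |p - q| * |log (p / q)| := by
        rw [← abs_mul]; exact le_abs_self _
    _ ≤ (exp ε - 1) * q * ε :=
        have hsub := abs_sub_le_exp_sub_one_mul hq hpq hqp
        mul_le_mul hsub (abs_log_div_le hε hp hq hpq hqp) (abs_nonneg _)
          ((abs_nonneg _).trans hsub)
    _ = ε * (exp ε - 1) * q := by ring

end RealInequalities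

lemma Summable.mul_log_div_of_abs_log_le {α : Type*} {p q : α → ℝ} {ε : ℝ}
    (hp : Summable p) (h : ∀ x, |log (p x / q x)| ≤ ε) :
    Summable fun x => p x * log (p x / q x) :=
  Summable.of_norm_bounded (hp.abs.mul_right ε) fun x => by
    rw [Real.norm_eq_abs, abs_mul]
    exact mul_le_mul_of_nonneg_left (h x) (abs_nonneg _)

namespace PMF

variable {α : Type*} (P Q : PMF α)

lemma summable_toReal : Summable fun x => (P x).toReal :=
  ENNReal.summable_toReal (P.tsum_coe ▸ ENNReal.one_ne_top)

lemma tsum_toReal : ∑' x, (P x).toReal = 1 := by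
  rw [← ENNReal.tsum_toReal_eq P.apply_ne_top, P.tsum_coe, ENNReal.toReal_one]

lemma toReal_apply_eq_zero_iff (x : α) : (P x).toReal = 0 ↔ P x = 0 := by
  simp [ENNReal.toReal_eq_zero_iff, P.apply_ne_top]

lemma pmfProb_singleton (x : α) : pmfProb P {x} = P x := by
  rw [pmfProb, ← tsum_subtype, tsum_singleton]

variable {P Q}

lemma toReal_apply_le_of_DinfExp_le {ε : ℝ} (h : DinfExp P Q ≤ ENNReal.ofReal (exp ε))
    (x : α) : (P x).toReal ≤ exp ε * (Q x).toReal := by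
  have hx : P x / Q x ≤ ENNReal.ofReal (exp ε) := by
    rw [← pmfProb_singleton P x, ← pmfProb_singleton Q x]
    exact (le_iSup (fun S => pmfProb P S / pmfProb Q S) {x}).trans h
  have hle : P x ≤ ENNReal.ofReal (exp ε) * Q x := by
    rwa [ENNReal.div_le_iff_le_mul (Or.inr ENNReal.ofReal_ne_top) (Or.inl (Q.apply_ne_top x))]
      at hx
  have := ENNReal.toReal_mono (ENNReal.mul_ne_top ENNReal.ofReal_ne_top (Q.apply_ne_top x)) hle
  rwa [ENNReal.toReal_mul, ENNReal.toReal_ofReal (exp_pos ε).le] at this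

lemma KL_nonneg (h : ∀ x, Q x = 0 → P x = 0) : 0 ≤ KL P Q := by
  by_cases hs : Summable fun x => (P x).toReal * log ((P x).toReal / (Q x).toReal)
  · calc (0 : ℝ) = ∑' x, ((P x).toReal - (Q x).toReal) := by
          rw [P.summable_toReal.tsum_sub Q.summable_toReal, tsum_toReal, tsum_toReal, sub_self]
      _ ≤ KL P Q :=
          (P.summable_toReal.sub Q.summable_toReal).tsum_le_tsum
            (fun x => sub_le_mul_log_div ENNReal.toReal_nonneg ENNReal.toReal_nonneg
              fun hq => (toReal_apply_eq_zero_iff P x).2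
                (h x ((toReal_apply_eq_zero_iff Q x).1 hq)))
            hs
  · exact (tsum_eq_zero_of_not_summable hs).ge

lemma KL_add_KL_le {ε : ℝ} (hε : 0 ≤ ε) (hPQ : ∀ x, (P x).toReal ≤ exp ε * (Q x).toReal)
    (hQP : ∀ x, (Q x).toReal ≤ exp ε * (P x).toReal) :
    KL P Q + KL Q P ≤ ε * (exp ε - 1) := by
  have hlog x := abs_log_div_le hε ENNReal.toReal_nonneg ENNReal.toReal_nonneg (hPQ x) (hQP x)
  have hlog' x := abs_log_div_le hε ENNReal.toReal_nonneg ENNReal.toReal_nonneg (hQP x) (hPQ x)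
  have hsPQ := P.summable_toReal.mul_log_div_of_abs_log_le hlog
  have hsQP := Q.summable_toReal.mul_log_div_of_abs_log_le hlog'
  calc KL P Q + KL Q P
      = ∑' x, ((P x).toReal * log ((P x).toReal / (Q x).toReal)
          + (Q x).toReal * log ((Q x).toReal / (P x).toReal)) := (hsPQ.tsum_add hsQP).symm
    _ ≤ ∑' x, ε * (exp ε - 1) * (Q x).toReal :=
        (hsPQ.add hsQP).tsum_le_tsum
          (fun x => mul_log_div_add_mul_log_div_le hε ENNReal.toReal_nonneg
            ENNReal.toReal_nonneg (hPQ x) (hQP x))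
          (Q.summable_toReal.mul_left _)
    _ = ε * (exp ε - 1) := by rw [tsum_mul_left, tsum_toReal, mul_one]

end PMF

theorem kl_add_kl_le_general {α : Type*} (D D' : PMF α) (ε : ℝ) (hε : 0 ≤ ε)
    (hsupp : D.support = D'.support)
    (h1 : DinfExp D D' ≤ ENNReal.ofReal (Real.exp ε))
    (h2 : DinfExp D' D ≤ ENNReal.ofReal (Real.exp ε)) :
    KL D D' + KL D' D ≤ ε * (Real.exp ε - 1) ∧ KL D D' ≤ ε * (Real.exp ε - 1) := by
  have hsum := PMF.KL_add_KL_le hε (PMF.toReal_apply_le_of_DinfExp_le h1)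
    (PMF.toReal_apply_le_of_DinfExp_le h2)
  have hgibbs : 0 ≤ KL D' D := PMF.KL_nonneg fun x hx =>
    (D'.apply_eq_zero_iff x).2 (hsupp ▸ (D.apply_eq_zero_iff x).1 hx)
  exact ⟨hsum, by linarith⟩

/-- **KL bound for bounded max divergence.** For any two discrete distributions `D, D'` on a
countable set with equal support such that `D_∞(D‖D') ≤ ε` and `D_∞(D'‖D) ≤ ε`, one has
`D_KL(D‖D') + D_KL(D'‖D) ≤ ε (e^ε − 1)`; in particular `D_KL(D‖D') ≤ ε (e^ε − 1)`. -/
theorem kl_add_kl_le {α : Type*} [Countable α] (D D' : PMF α) (ε : ℝ) (hε : 0 ≤ ε)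
    (hsupp : D.support = D'.support)
    (h1 : DinfExp D D' ≤ ENNReal.ofReal (Real.exp ε))
    (h2 : DinfExp D' D ≤ ENNReal.ofReal (Real.exp ε)) :
    KL D D' + KL D' D ≤ ε * (Real.exp ε - 1) ∧ KL D D' ≤ ε * (Real.exp ε - 1) :=
  kl_add_kl_le_general D D' ε hε hsupp h1 h2
end

section
/- For every ε ≥ 0, every α ∈ [−1,1] with α ≠ 0, and every p ≥ 0, writing s = sign(α) ∈ {−1, 1}, the following inequality holds: p · e^(s·ε) · ((e^(α·ε) − 1)/(e^(s·ε) − 1)) · s · ε − p · e^(α·ε) · α · ε ≥ 0 (where for ε = 0 the quotient is interpreted by continuity as α). Equivalently, the per-element contribution to KL divergence does not decrease when the mass pair (e^(α·ε)·p, p) is split into the antipodal pair with log-ratio s·ε and an equal-mass remainder. -/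
/-!
Put `t = a ε` and `u = s ε`. Since `a` lies between `0` and `s = sign a`, the point `e^t` lies
between `1` and `e^u`, and `q = (e^t - 1)/(e^u - 1) ∈ [0, 1]` is its barycentric coordinate:
`e^t = (1 - q) · 1 + q · e^u`. Convexity of `x ↦ x log x`, which vanishes at `1`, then gives
`e^t t ≤ q e^u u`, which is the claim divided by `p`.
-/

open Real Set
open scoped Interval

lemma mul_log_one_sub_add_mul_le {q y : ℝ} (hq0 : 0 ≤ q) (hq1 : q ≤ 1) (hy : 0 ≤ y) :
    (1 - q + q * y) * log (1 - q + q * y) ≤ q * (y * log y) := by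
  have h := convexOn_mul_log.2 (mem_Ici.2 zero_le_one) (mem_Ici.2 hy) (sub_nonneg.2 hq1) hq0
    (sub_add_cancel 1 q)
  simpa [smul_eq_mul] using h

lemma exp_sub_one_div_exp_sub_one_mem_Icc {t u : ℝ} (h : t ∈ [[0, u]]) :
    (exp t - 1) / (exp u - 1) ∈ Icc 0 1 := by
  rcases mem_uIcc.1 h with ⟨ht, htu⟩ | ⟨hut, ht⟩
  · have hnum : 0 ≤ exp t - 1 := sub_nonneg.2 (one_le_exp ht)
    have hle : exp t - 1 ≤ exp u - 1 := sub_le_sub_right (exp_le_exp.2 htu) 1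
    exact ⟨div_nonneg hnum (hnum.trans hle), div_le_one_of_le₀ hle (hnum.trans hle)⟩
  · rw [← neg_div_neg_eq, neg_sub, neg_sub]
    have hnum : 0 ≤ 1 - exp t := sub_nonneg.2 (exp_le_one_iff.2 ht)
    have hle : 1 - exp t ≤ 1 - exp u := sub_le_sub_left (exp_le_exp.2 hut) 1
    exact ⟨div_nonneg hnum (hnum.trans hle), div_le_one_of_le₀ hle (hnum.trans hle)⟩

lemma exp_mul_self_le_of_mem_uIcc {t u : ℝ} (h : t ∈ [[0, u]]) :
    exp t * t ≤ (exp t - 1) / (exp u - 1) * (exp u * u) := by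
  rcases eq_or_ne u 0 with rfl | hu
  -- then `t = 0`, and both sides vanish (the right one through `0 / 0 = 0`)
  · simp_all
  set q := (exp t - 1) / (exp u - 1)
  have hcoord : 1 - q + q * exp u = exp t := by
    have : exp u - 1 ≠ 0 := sub_ne_zero.2 (mt (exp_eq_one_iff u).1 hu)
    simp only [q]
    field_simp
    ring
  obtain ⟨hq0, hq1⟩ := exp_sub_one_div_exp_sub_one_mem_Icc h
  have h := mul_log_one_sub_add_mul_le hq0 hq1 (exp_nonneg u)
  rwa [hcoord, log_exp, log_exp] at h

lemma mem_uIcc_zero_sign {a : ℝ} (ha : a ∈ Icc (-1 : ℝ) 1) :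
    a ∈ [[0, if 0 < a then 1 else -1]] := by
  split_ifs with hpos
  · exact mem_uIcc_of_le hpos.le ha.2
  · exact mem_uIcc_of_ge ha.1 (not_lt.1 hpos)

theorem kl_grows_general (ε a p s q : ℝ) (ha : a ∈ Set.Icc (-1 : ℝ) 1)
    (hp : 0 ≤ p) (hs : s = if 0 < a then 1 else -1)
    (hq : q = if ε = 0 then a else (Real.exp (a * ε) - 1) / (Real.exp (s * ε) - 1)) :
    0 ≤ p * Real.exp (s * ε) * q * s * ε - p * Real.exp (a * ε) * a * ε := by
  rcases eq_or_ne ε 0 with rfl | hε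
  · simp
  rw [if_neg hε] at hq
  have hmem : a * ε ∈ [[0, s * ε]] := by
    rw [← zero_mul ε, ← image_mul_const_uIcc]
    exact mem_image_of_mem _ (hs ▸ mem_uIcc_zero_sign ha)
  have key := exp_mul_self_le_of_mem_uIcc hmem
  rw [← hq] at key
  linear_combination mul_le_mul_of_nonneg_left key hp

/-- **Per-element KL contribution grows under the antipodal split.** For every `ε ≥ 0`,
every `α ∈ [−1,1]` with `α ≠ 0`, and every `p ≥ 0`, writing `s = sign α ∈ {−1, 1}` and
`q = (e^(αε) − 1)/(e^(sε) − 1)` (interpreted by continuity as `α` when `ε = 0`), we have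
`p · e^(sε) · q · s · ε − p · e^(αε) · α · ε ≥ 0`. -/
theorem kl_grows (ε a p s q : ℝ) (hε : 0 ≤ ε) (ha : a ∈ Set.Icc (-1 : ℝ) 1) (ha0 : a ≠ 0)
    (hp : 0 ≤ p) (hs : s = if 0 < a then 1 else -1)
    (hq : q = if ε = 0 then a else (Real.exp (a * ε) - 1) / (Real.exp (s * ε) - 1)) :
    0 ≤ p * Real.exp (s * ε) * q * s * ε - p * Real.exp (a * ε) * a * ε :=
  kl_grows_general ε a p s q ha hp hs hq
end
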